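/- Let E be a real inner product space, x ∈ E, and let W₀, W₁, …, W_k be finite-dimensional subspaces of E with p_i denoting the orthogonal projection of x onto W_i. Assume p_i ∈ W_{i+1} for every 0 ≤ i ≤ k-1. Then for every 1 ≤ s ≤ k, ‖p_s‖² = ‖p₀‖² + Σ_{i=1}^{s} ‖p_i - p_{i-1}‖². -/
import Mathlib


open scoped RealInnerProductSpace

/-- in an AP sweep, where `p i` is the orthogonal projection of `x`
onto the finite-dimensional subspace `W i` and `p i ∈ W (i+1)`, one has
`‖p s‖² = ‖p 0‖² + Σ_{i=1}^{s} ‖p i - p (i-1)‖²` for every `1 ≤ s ≤ k`. -/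
theorem ap_norm_telescoping_sum
    {E : Type*} [NormedAddCommGroup E] [InnerProductSpace ℝ E]
    (k : ℕ) (x : E) (W : ℕ → Submodule ℝ E) (hWfd : ∀ i ≤ k, FiniteDimensional ℝ (W i))
    (p : ℕ → E)
    (hmem : ∀ i ≤ k, p i ∈ W i)
    (horth : ∀ i ≤ k, ∀ w ∈ W i, ⟪x - p i, w⟫ = 0)
    (hchain : ∀ i < k, p i ∈ W (i + 1)) :
    ∀ s : ℕ, 1 ≤ s → s ≤ k →
      ‖p s‖ ^ 2 = ‖p 0‖ ^ 2 + ∑ i ∈ Finset.Icc 1 s, ‖p i - p (i - 1)‖ ^ 2 := by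
  have key : ∀ s : ℕ, s < k → ‖p (s+1)‖ ^ 2 = ‖p s‖ ^ 2 + ‖p (s+1) - p s‖ ^ 2 := by
    intro s hs
    have hsk : s + 1 ≤ k := hs
    have hpmem : p s ∈ W (s + 1) := hchain s hs
    have h1 : ⟪x - p (s+1), p s⟫ = 0 := horth (s+1) hsk (p s) hpmem
    have h2 : ⟪x - p s, p s⟫ = 0 := horth s (le_of_lt hs) (p s) (hmem s (le_of_lt hs))
    have horth' : ⟪p (s+1) - p s, p s⟫ = 0 := by
      have : (x - p s) - (x - p (s+1)) = p (s+1) - p s := by abel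
      rw [← this, inner_sub_left, h1, h2]; ring
    have : ‖p (s+1)‖ ^ 2 = ‖(p (s+1) - p s) + p s‖ ^ 2 := by
      rw [sub_add_cancel]
    rw [this, norm_add_sq_real, horth']
    ring
  intro s hs1 hsk
  induction s with
  | zero => omega
  | succ n ih =>
    rcases Nat.eq_zero_or_pos n with rfl | hn
    · simp [key 0 hsk]
    · have hnk : n ≤ k := by omega
      rw [Finset.sum_Icc_succ_top (by omega : 1 ≤ n + 1), ← add_assoc,
        ← ih hn hnk, key n (by omega)]
      simp
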